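/- arXiv:1906.03113 — 4 statements merged into one kernel-verified Lean document; each statement's English description precedes it below -/
import Mathlib

section
/- Define the recurrence x_{k+1} = A[V_{k+1},V_k]·x_k over the Boolean semiring, where V_1 = V, x_1 is the indicator of a source s, and V_{k+1} = V_k \ supp(x_k). Then for every k ≥ 1, supp(x_k) is exactly the set of vertices at graph distance k−1 from s. -/
/-- Matrix-vector multiplication over the Boolean semiring (OR/AND). -/
def bVecMul {n : ℕ} (A : Matrix (Fin n) (Fin n) Bool) (x : Fin n → Bool) : Fin n → Bool :=
  fun i => decide (∃ j, A i j = true ∧ x j = true)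

/-- Support of a Boolean vector. -/
def bSupp {n : ℕ} (x : Fin n → Bool) : Finset (Fin n) :=
  Finset.univ.filter fun i => x i = true

/-- `bMask R C A` zeroes out the rows of `A` outside `R` and the columns outside `C`. -/
def bMask {n : ℕ} (R C : Finset (Fin n)) (A : Matrix (Fin n) (Fin n) Bool) :
    Matrix (Fin n) (Fin n) Bool :=
  Matrix.of fun i j => decide (i ∈ R) && A i j && decide (j ∈ C)

/-- Masked BFS recurrence: `bfs A s k = (V_{k+1}, x_{k+1})` where `V_1 = univ`,
`x_1` is the indicator of `s`, `V_{k+1} = V_k \ supp x_k` and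
`x_{k+1} = A[V_{k+1}, V_k] ⬝ x_k` over the Boolean semiring. -/
def bfs {n : ℕ} (A : Matrix (Fin n) (Fin n) Bool) (s : Fin n) :
    ℕ → Finset (Fin n) × (Fin n → Bool)
  | 0 => (Finset.univ, fun v => decide (v = s))
  | k + 1 =>
    let p := bfs A s k
    let V' := p.1 \ bSupp p.2
    (V', bVecMul (bMask V' p.1 A) p.2)

/-- `hasWalk A s k v` : there is a walk of length exactly `k` from `s` to `v`,
where `A i j = true` means there is an edge from `j` to `i`. -/
def hasWalk {n : ℕ} (A : Matrix (Fin n) (Fin n) Bool) (s : Fin n) : ℕ → Fin n → Prop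
  | 0, v => v = s
  | k + 1, v => ∃ j, hasWalk A s k j ∧ A v j = true

theorem bfs_aux {n : ℕ} (A : Matrix (Fin n) (Fin n) Bool) (s : Fin n) (k : ℕ) :
    (∀ v, ((bfs A s k).2 v = true ↔ hasWalk A s k v ∧ ∀ l < k, ¬ hasWalk A s l v)) ∧
    (∀ v, (v ∈ (bfs A s k).1 ↔ ∀ l < k, ¬ hasWalk A s l v)) := by
  induction k with
  | zero =>
    constructor
    · intro v; simp [bfs, hasWalk]
    · intro v; simp [bfs]
  | succ k ih =>
    obtain ⟨ihx, ihV⟩ := ih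
    have hV' : ∀ v, (v ∈ (bfs A s (k+1)).1 ↔ ∀ l < k+1, ¬ hasWalk A s l v) := by
      intro v
      show v ∈ (bfs A s k).1 \ bSupp (bfs A s k).2 ↔ _
      rw [Finset.mem_sdiff]
      simp only [bSupp, Finset.mem_filter, Finset.mem_univ, true_and]
      rw [ihV v, ihx v]
      constructor
      · rintro ⟨h1, h2⟩ l hl
        rcases Nat.lt_succ_iff_lt_or_eq.mp hl with h | rfl
        · exact h1 l h
        · intro hw; exact h2 ⟨hw, h1⟩
      · intro h
        exact ⟨fun l hl => h l (hl.trans (Nat.lt_succ_self k)),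
          fun hp => h k (Nat.lt_succ_self k) hp.1⟩
    refine ⟨?_, hV'⟩
    intro v
    have hx : (bfs A s (k+1)).2 v =
        bVecMul (bMask ((bfs A s (k+1)).1) (bfs A s k).1 A) (bfs A s k).2 v := rfl
    rw [hx]
    simp only [bVecMul, bMask, Matrix.of_apply, decide_eq_true_eq, Bool.and_eq_true,
      decide_eq_true_iff]
    constructor
    · rintro ⟨j, ⟨⟨hvV, hA⟩, _⟩, hxj⟩
      have hjw := (ihx j).mp hxj
      exact ⟨⟨j, hjw.1, hA⟩, (hV' v).mp hvV⟩
    · rintro ⟨⟨j, hwj, hA⟩, hmin⟩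
      refine ⟨j, ⟨⟨(hV' v).mpr hmin, hA⟩, ?_⟩, ?_⟩
      · rw [ihV j]
        intro l hl hw
        exact hmin (l+1) (Nat.succ_lt_succ hl) ⟨j, hw, hA⟩
      · rw [ihx j]
        exact ⟨hwj, fun l hl hw => hmin (l+1) (Nat.succ_lt_succ hl) ⟨j, hw, hA⟩⟩

/-- For the masked BFS recurrence `x_{k+1} = A[V_{k+1},V_k] x_k` on an undirected graph,
`supp (x_k)` is exactly the set of vertices at graph distance `k - 1` from the source.
(Here `(bfs A s k).2 = x_{k+1}`.) -/
theorem bfs_supp_eq_dist {n : ℕ} (A : Matrix (Fin n) (Fin n) Bool)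
    (hSym : ∀ i j, A i j = A j i) (s : Fin n) (k : ℕ) (v : Fin n) :
    (bfs A s k).2 v = true ↔
      hasWalk A s k v ∧ ∀ l < k, ¬ hasWalk A s l v := by
  exact (bfs_aux A s k).1 v
end

section
/- In the masked BFS recurrence x_{k+1} = A[V_{k+1},V_k]·x_k, if a matrix entry A(i,j) contributes a nonzero product at some step k (i.e., j ∈ supp(x_k) ∩ V_k and i ∈ V_{k+1}), then the transpose entry A(j,i) never contributes a nonzero product at any step. Hence the set of (i,j) pairs used across all steps contains no pair together with its transpose, and for an undirected graph with m edges at most m entries of A are used. -/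
/-- Entry `A i j` contributes a nonzero product at (zero-indexed) step `k` of the
masked BFS recurrence: `j ∈ supp x_{k+1} ∩ V_{k+1}` and `i ∈ V_{k+2}`. -/
def usedEntry {n : ℕ} (A : Matrix (Fin n) (Fin n) Bool) (s : Fin n)
    (k : ℕ) (i j : Fin n) : Prop :=
  (bfs A s k).2 j = true ∧ j ∈ (bfs A s k).1 ∧ i ∈ (bfs A s (k + 1)).1 ∧ A i j = true


lemma bfs_antitone {n : ℕ} (A : Matrix (Fin n) (Fin n) Bool) (s : Fin n) :
    ∀ {l k : ℕ}, l ≤ k → (bfs A s k).1 ⊆ (bfs A s l).1 := by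
  intro l k h
  induction k with
  | zero =>
    have : l = 0 := Nat.le_zero.mp h
    subst this; exact subset_rfl
  | succ k ih =>
    rcases Nat.lt_or_ge l (k+1) with h' | h'
    · exact Finset.Subset.trans (Finset.sdiff_subset) (ih (Nat.lt_succ_iff.mp h'))
    · have : l = k+1 := le_antisymm h h'
      subst this; exact subset_rfl

lemma bfs_supp_excluded {n : ℕ} (A : Matrix (Fin n) (Fin n) Bool) (s : Fin n) (k : ℕ)
    (j : Fin n) (hj : (bfs A s k).2 j = true) : j ∉ (bfs A s (k+1)).1 := by
  show j ∉ (bfs A s k).1 \ bSupp (bfs A s k).2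
  simp [bSupp, hj]

/-- If `A i j` contributes a nonzero product at some step of the masked BFS, then the
transpose entry `A j i` never contributes at any step; hence the set of used entry
positions contains no pair together with its transpose, and for an undirected graph with
`m` edges at most `m` entries of `A` are used. -/
theorem bfs_transpose_not_used {n m : ℕ} (A : Matrix (Fin n) (Fin n) Bool)
    (hSym : ∀ i j, A i j = A j i) (hLoop : ∀ i, A i i = false)
    (hm : Set.ncard {p : Fin n × Fin n | A p.1 p.2 = true} = 2 * m) (s : Fin n) :
    (∀ k i j, usedEntry A s k i j → ∀ l, ¬ usedEntry A s l j i) ∧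
    Set.ncard {p : Fin n × Fin n | ∃ k, usedEntry A s k p.1 p.2} ≤ m := by
  have key : ∀ k i j, usedEntry A s k i j → ∀ l, ¬ usedEntry A s l j i := by
    intro k i j hu l hu'
    obtain ⟨hxj, hjV, hiV, hA⟩ := hu
    obtain ⟨hxi, hiV', hjV', hA'⟩ := hu'
    rcases le_or_gt l k with h | h
    · exact bfs_supp_excluded A s l i hxi (bfs_antitone A s (Nat.succ_le_succ h) hiV)
    · exact bfs_supp_excluded A s k j hxj (bfs_antitone A s (Nat.succ_le_succ h.le) hjV')
  refine ⟨key, ?_⟩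
  set U : Set (Fin n × Fin n) := {p | ∃ k, usedEntry A s k p.1 p.2} with hU
  have hsub : U ∪ Prod.swap '' U ⊆ {p : Fin n × Fin n | A p.1 p.2 = true} := by
    rintro p (hp | ⟨q, hq, rfl⟩)
    · obtain ⟨k, _, _, _, hA⟩ := hp; exact hA
    · obtain ⟨k, _, _, _, hA⟩ := hq
      exact (hSym q.2 q.1).trans hA
  have hdisj : Disjoint U (Prod.swap '' U) := by
    rw [Set.disjoint_left]
    rintro p hp ⟨q, hq, rfl⟩
    obtain ⟨k, hk⟩ := hq
    obtain ⟨l, hl⟩ := hp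
    exact key k q.1 q.2 hk l hl
  have h1 : (U ∪ Prod.swap '' U).ncard = U.ncard + (Prod.swap '' U).ncard :=
    Set.ncard_union_eq hdisj (Set.toFinite _) (Set.toFinite _)
  have h2 : (Prod.swap '' U).ncard = U.ncard :=
    Set.ncard_image_of_injective _ Prod.swap_injective
  have h3 : (U ∪ Prod.swap '' U).ncard ≤ 2 * m :=
    hm ▸ Set.ncard_le_ncard hsub (Set.toFinite _)
  omega
end

section
/- Let y_k = A·y_{k−1} be the unmasked Boolean BFS recurrence and x_{k+1} = A_k·x_k the symmetric masked recurrence, where A_k = S_k A S_k, S_k is the selection matrix of V_k = V_{k−1} \ supp(x_{k−1}), and x_1 = y_1 is the source indicator vector. Then S_k·x_k = S_k·y_k for all k, and consequently x_{k+1} = A_k·y_k = A_k·A^{k−1}·x_1. -/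
/-- Symmetric masked BFS recurrence: `sbfs A s k = (V_{k+1}, x_{k+1})` where
`x_{k+1} = A[V_k, V_k] x_k` and `V_{k+1} = V_k \ supp x_k`. -/
def sbfs {n : ℕ} (A : Matrix (Fin n) (Fin n) Bool) (s : Fin n) :
    ℕ → Finset (Fin n) × (Fin n → Bool)
  | 0 => (Finset.univ, fun v => decide (v = s))
  | k + 1 =>
    let p := sbfs A s k
    (p.1 \ bSupp p.2, bVecMul (bMask p.1 p.1 A) p.2)

/-! Every in-neighbour of a vertex of `V_{k+1}` lies in `V_k`: a neighbour discovered at an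
earlier step `m` would have put the vertex into `x_{m+1}`. So on `V_{k+1}` the masked product
`A_k x_k` only reads entries of `x_k` inside `V_k`, where by induction `x_k` agrees with `y_k`,
and the mask is then invisible. -/

section Boolean

variable {n : ℕ} {A : Matrix (Fin n) (Fin n) Bool} {R C : Finset (Fin n)}

theorem bVecMul_eq_true_iff {x : Fin n → Bool} {i : Fin n} :
    bVecMul A x i = true ↔ ∃ j, A i j = true ∧ x j = true := by
  simp only [bVecMul, decide_eq_true_eq]

theorem bMask_apply_eq_true_iff {i j : Fin n} :
    bMask R C A i j = true ↔ i ∈ R ∧ A i j = true ∧ j ∈ C := by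
  simp only [bMask, Matrix.of_apply, Bool.and_eq_true, decide_eq_true_eq, and_assoc]

theorem bVecMul_bMask_congr {x y : Fin n → Bool} (h : ∀ j ∈ C, x j = y j) :
    bVecMul (bMask R C A) x = bVecMul (bMask R C A) y := by
  funext i
  refine Bool.eq_iff_iff.mpr ?_
  simp only [bVecMul_eq_true_iff, bMask_apply_eq_true_iff]
  refine exists_congr fun j => and_congr_right fun hij => ?_
  rw [h j hij.2.2]

theorem bVecMul_bMask_apply_of_mem {x : Fin n → Bool} {i : Fin n} (hi : i ∈ R)
    (hC : ∀ j, A i j = true → j ∈ C) :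
    bVecMul (bMask R C A) x i = bVecMul A x i := by
  refine Bool.eq_iff_iff.mpr ?_
  simp only [bVecMul_eq_true_iff, bMask_apply_eq_true_iff]
  exact exists_congr fun j => and_congr_left fun _ =>
    ⟨fun h => h.2.1, fun hA => ⟨hi, hA, hC j hA⟩⟩

end Boolean

section sbfs

variable {n : ℕ} {A : Matrix (Fin n) (Fin n) Bool} {s : Fin n}

theorem sbfs_fst_succ_subset (k : ℕ) : (sbfs A s (k + 1)).1 ⊆ (sbfs A s k).1 :=
  Finset.sdiff_subset

theorem sbfs_snd_succ_apply_eq_true {k : ℕ} {i j : Fin n} (hi : i ∈ (sbfs A s k).1)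
    (hj : j ∈ (sbfs A s k).1) (hA : A i j = true) (hx : (sbfs A s k).2 j = true) :
    (sbfs A s (k + 1)).2 i = true :=
  bVecMul_eq_true_iff.mpr ⟨j, bMask_apply_eq_true_iff.mpr ⟨hi, hA, hj⟩, hx⟩

theorem mem_sbfs_fst_of_adj {k : ℕ} {i j : Fin n} (hi : i ∈ (sbfs A s (k + 1)).1)
    (hA : A i j = true) : j ∈ (sbfs A s k).1 := by
  induction k with
  | zero => exact Finset.mem_univ j
  | succ k ih =>
    have hik : i ∈ (sbfs A s k).1 :=
      sbfs_fst_succ_subset k (sbfs_fst_succ_subset (k + 1) hi)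
    refine Finset.mem_sdiff.mpr ⟨ih (sbfs_fst_succ_subset (k + 1) hi), fun hj => ?_⟩
    have hxi : (sbfs A s (k + 1)).2 i = true :=
      sbfs_snd_succ_apply_eq_true hik (ih (sbfs_fst_succ_subset (k + 1) hi)) hA
        (Finset.mem_filter.mp hj).2
    exact (Finset.mem_sdiff.mp hi).2 (Finset.mem_filter.mpr ⟨Finset.mem_univ i, hxi⟩)

theorem sbfs_snd_eq_iterate (k : ℕ) :
    ∀ i ∈ (sbfs A s k).1, (sbfs A s k).2 i = (bVecMul A)^[k] (fun v => decide (v = s)) i := by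
  induction k with
  | zero => exact fun _ _ => rfl
  | succ k ih =>
    intro i hi
    calc (sbfs A s (k + 1)).2 i
        = bVecMul (bMask (sbfs A s k).1 (sbfs A s k).1 A) (sbfs A s k).2 i := rfl
      _ = bVecMul (bMask (sbfs A s k).1 (sbfs A s k).1 A)
            ((bVecMul A)^[k] (fun v => decide (v = s))) i := by rw [bVecMul_bMask_congr ih]
      _ = bVecMul A ((bVecMul A)^[k] (fun v => decide (v = s))) i :=
          bVecMul_bMask_apply_of_mem (sbfs_fst_succ_subset k hi)
            fun _ hA => mem_sbfs_fst_of_adj hi hA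
      _ = (bVecMul A)^[k + 1] (fun v => decide (v = s)) i := by
          rw [Function.iterate_succ_apply']

end sbfs

theorem masked_eq_transform_unmasked_general {n : ℕ} (A : Matrix (Fin n) (Fin n) Bool)
    (s : Fin n) (k : ℕ) :
    ((fun i => decide (i ∈ (sbfs A s k).1) && (sbfs A s k).2 i) =
      fun i => decide (i ∈ (sbfs A s k).1) &&
        ((bVecMul A)^[k] (fun v => decide (v = s))) i) ∧
    (sbfs A s (k + 1)).2 =
      bVecMul (bMask (sbfs A s k).1 (sbfs A s k).1 A)
        ((bVecMul A)^[k] (fun v => decide (v = s))) := by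
  have hagree := sbfs_snd_eq_iterate (A := A) (s := s) k
  refine ⟨funext fun i => ?_, bVecMul_bMask_congr hagree⟩
  by_cases hi : i ∈ (sbfs A s k).1
  · rw [hagree i hi]
  · simp only [hi, decide_false, Bool.false_and]

/-- With `y_k = A y_{k-1}` the unmasked Boolean recurrence and
`x_{k+1} = A_k x_k` the symmetric masked recurrence (`A_k = S_k A S_k`),
one has `S_k x_k = S_k y_k` for all `k`, and consequently
`x_{k+1} = A_k y_k = A_k A^{k-1} x₁`.  (Here `(sbfs A s k).1 = V_{k+1}`,
`(sbfs A s k).2 = x_{k+1}` and `(bVecMul A)^[k] x₁ = y_{k+1}`.) -/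
theorem masked_eq_transform_unmasked {n : ℕ} (A : Matrix (Fin n) (Fin n) Bool)
    (hSym : ∀ i j, A i j = A j i) (s : Fin n) (k : ℕ) :
    ((fun i => decide (i ∈ (sbfs A s k).1) && (sbfs A s k).2 i) =
      fun i => decide (i ∈ (sbfs A s k).1) &&
        ((bVecMul A)^[k] (fun v => decide (v = s))) i) ∧
    (sbfs A s (k + 1)).2 =
      bVecMul (bMask (sbfs A s k).1 (sbfs A s k).1 A)
        ((bVecMul A)^[k] (fun v => decide (v = s))) :=
  masked_eq_transform_unmasked_general A s k
end

section
/- In the masked BFS recurrence x_{k+1} = A[V_{k+1},V_k]·x_k starting from source s, the sets V_k satisfy V_k = V \ {v : dist(s,v) ≤ k − 2} for all k ≥ 2; that is, the remaining index set at step k consists exactly of the vertices at distance at least k − 1 from s (including unreachable vertices). -/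
lemma bfs_spec {n : ℕ} (A : Matrix (Fin n) (Fin n) Bool) (s : Fin n) (k : ℕ) (v : Fin n) :
    (v ∈ (bfs A s k).1 ↔ ¬∃ l < k, hasWalk A s l v) ∧
    ((bfs A s k).2 v = true ↔ (hasWalk A s k v ∧ ¬∃ l < k, hasWalk A s l v)) := by
  induction k generalizing v with
  | zero =>
    constructor
    · simp [bfs]
    · simp [bfs, hasWalk]
  | succ k ih =>
    have hV : ∀ w, w ∈ (bfs A s (k+1)).1 ↔ ¬∃ l < k + 1, hasWalk A s l w := by
      intro w
      show w ∈ (bfs A s k).1 \ bSupp (bfs A s k).2 ↔ _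
      rw [Finset.mem_sdiff]
      simp only [bSupp, Finset.mem_filter, Finset.mem_univ, true_and]
      rw [(ih w).1, (ih w).2]
      constructor
      · rintro ⟨h1, h2⟩ ⟨l, hl, hw⟩
        rcases Nat.lt_succ_iff_lt_or_eq.mp hl with h | h
        · exact h1 ⟨l, h, hw⟩
        · subst h; exact h2 ⟨hw, h1⟩
      · intro h
        exact ⟨fun ⟨l, hl, hw⟩ => h ⟨l, by omega, hw⟩, fun ⟨hw, _⟩ => h ⟨k, by omega, hw⟩⟩
    refine ⟨hV v, ?_⟩
    show bVecMul (bMask ((bfs A s k).1 \ bSupp (bfs A s k).2) (bfs A s k).1 A) (bfs A s k).2 v = true ↔ _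
    rw [bVecMul]
    simp only [bMask, Matrix.of_apply, Bool.and_eq_true, decide_eq_true_eq]
    constructor
    · rintro ⟨w, ⟨⟨hvV, hA⟩, hwV⟩, hx⟩
      rw [(ih w).2] at hx
      have hv := (hV v).mp hvV
      refine ⟨⟨w, hx.1, hA⟩, ?_⟩
      rintro ⟨l, hl, hw⟩
      exact hv ⟨l, by omega, hw⟩
    · rintro ⟨⟨w, hw, hA⟩, hnone⟩
      have hwV : w ∈ (bfs A s k).1 := by
        rw [(ih w).1]
        rintro ⟨l, hl, hwl⟩
        exact hnone ⟨l + 1, by omega, ⟨w, hwl, hA⟩⟩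
      have hvV : v ∈ (bfs A s k).1 \ bSupp (bfs A s k).2 := by
        rw [show ((bfs A s k).1 \ bSupp (bfs A s k).2) = (bfs A s (k+1)).1 from rfl, hV]
        rintro ⟨l, hl, hwl⟩
        exact hnone ⟨l, by omega, hwl⟩
      refine ⟨w, ⟨⟨hvV, hA⟩, hwV⟩, ?_⟩
      rw [(ih w).2]
      refine ⟨hw, ?_⟩
      rintro ⟨l, hl, hwl⟩
      exact hnone ⟨l + 1, by omega, ⟨w, hwl, hA⟩⟩

/-- In the masked BFS recurrence the remaining index set at step `k ≥ 2` is exactly the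
set of vertices at distance at least `k - 1` from the source (including unreachable
vertices):  `V_k = V \ {v : dist(s,v) ≤ k - 2}`.
(Here `(bfs A s (j+1)).1 = V_{j+2}`, so the paper's `k` is `j + 2`.) -/
theorem bfs_mask_eq_far_vertices {n : ℕ} (A : Matrix (Fin n) (Fin n) Bool)
    (hSym : ∀ i j, A i j = A j i) (s : Fin n) (j : ℕ) (v : Fin n) :
    v ∈ (bfs A s (j + 1)).1 ↔ ¬ ∃ l ≤ j, hasWalk A s l v := by
  rw [(bfs_spec A s (j+1) v).1]
  constructor
  · rintro h ⟨l, hl, hw⟩; exact h ⟨l, by omega, hw⟩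
  · rintro h ⟨l, hl, hw⟩; exact h ⟨l, by omega, hw⟩
end
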